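/- Let p and p_w be probability mass functions on a finite type V of cardinality N, let C > 0, α > 0, let w ≥ 1 be a natural number with TV(p, p_w) ≤ C·w^{−α}, and let μ ∈ (0, 1) satisfy C·w^{−α} ≤ μ/(2N). Define the smoothed reconstruction p^{μ,w}(x) := (1−μ)·p_w(x) + μ/N. Then KL(p‖p^{μ,w}) ≤ (2N/μ)·(C·w^{−α} + μ)². -/

import Mathlib

/-!
Since `p` and the smoothed reconstruction `q` both sum to one, `KL(p‖q)` is bounded by the
χ²-divergence `∑ (p - q)² / q`. Smoothing keeps `q ≥ μ/N`, so the χ²-divergence is at most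
`(N/μ) ∑ (p - q)²`, and `∑ (p - q)² ≤ 2 TV(p, q)²` because each `|p x - q x|` is at most
`TV(p, q)`. Finally `TV(p, q) ≤ TV(p, p_w) + TV(p_w, q) ≤ C w^{-α} + μ`.
-/

open Finset

/-- Total variation distance between two pmfs on a finite type. -/
noncomputable def TV {V : Type*} [Fintype V] (p q : V → ℝ) : ℝ :=
  (1 / 2) * ∑ x, |p x - q x|

/-- Kullback–Leibler divergence between two pmfs on a finite type. -/
noncomputable def KL {V : Type*} [Fintype V] (p q : V → ℝ) : ℝ :=
  ∑ x, p x * Real.log (p x / q x)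

noncomputable def chiSq {V : Type*} [Fintype V] (p q : V → ℝ) : ℝ :=
  ∑ x, (p x - q x) ^ 2 / q x

section

variable {V : Type*} [Fintype V]

theorem TV_nonneg (p q : V → ℝ) : 0 ≤ TV p q := by
  unfold TV
  positivity

theorem TV_triangle (p q r : V → ℝ) : TV p r ≤ TV p q + TV q r := by
  unfold TV
  rw [← mul_add, ← sum_add_distrib]
  gcongr with x
  exact abs_sub_le (p x) (q x) (r x)

theorem TV_le_one {p q : V → ℝ} (hp0 : ∀ x, 0 ≤ p x) (hp1 : ∑ x, p x = 1)
    (hq0 : ∀ x, 0 ≤ q x) (hq1 : ∑ x, q x = 1) : TV p q ≤ 1 := by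
  have hpt : ∀ x, |p x - q x| ≤ p x + q x := fun x =>
    abs_le.2 ⟨by linarith [hp0 x], by linarith [hq0 x]⟩
  calc TV p q ≤ 1 / 2 * ∑ x, (p x + q x) := by unfold TV; gcongr with x; exact hpt x
    _ = 1 := by rw [sum_add_distrib, hp1, hq1]; norm_num

theorem TV_mix_eq (q u : V → ℝ) (μ : ℝ) :
    TV q (fun x => (1 - μ) * q x + μ * u x) = |μ| * TV q u := by
  have hpt : ∀ x, |q x - ((1 - μ) * q x + μ * u x)| = |μ| * |q x - u x| := fun x => by
    rw [← abs_mul]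
    ring_nf
  unfold TV
  rw [sum_congr rfl fun x _ => hpt x, ← mul_sum]
  ring

/-- As `p - q` sums to zero, `|p x - q x|` is at most `∑_{y ≠ x} |p y - q y|`. -/
theorem abs_sub_le_TV {p q : V → ℝ} (h : ∑ x, p x = ∑ x, q x) (x : V) :
    |p x - q x| ≤ TV p q := by
  classical
  have hsum : ∑ y, (p y - q y) = 0 := by rw [sum_sub_distrib, h, sub_self]
  rw [← add_sum_erase univ _ (mem_univ x)] at hsum
  have hrest : |p x - q x| ≤ ∑ y ∈ univ.erase x, |p y - q y| := by
    rw [eq_neg_of_add_eq_zero_left hsum, abs_neg]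
    exact abs_sum_le_sum_abs _ _
  have htotal := add_sum_erase univ (fun y => |p y - q y|) (mem_univ x)
  unfold TV
  linarith

theorem sum_sq_sub_le_two_mul_TV_sq {p q : V → ℝ} (h : ∑ x, p x = ∑ x, q x) :
    ∑ x, (p x - q x) ^ 2 ≤ 2 * TV p q ^ 2 :=
  calc ∑ x, (p x - q x) ^ 2 = ∑ x, |p x - q x| * |p x - q x| := by simp only [← sq, sq_abs]
    _ ≤ ∑ x, TV p q * |p x - q x| := by gcongr with x; exact abs_sub_le_TV h x
    _ = 2 * TV p q ^ 2 := by rw [← mul_sum]; unfold TV; ring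

theorem KL_le_chiSq {p q : V → ℝ} (hp : ∀ x, 0 ≤ p x) (hq : ∀ x, 0 < q x)
    (h : ∑ x, p x = ∑ x, q x) : KL p q ≤ chiSq p q := by
  have hpt : ∀ x, p x * Real.log (p x / q x) ≤ (p x - q x) ^ 2 / q x + (p x - q x) := by
    intro x
    have hexpand : (p x - q x) ^ 2 / q x + (p x - q x) = p x * (p x / q x - 1) := by
      field_simp [(hq x).ne']
      ring
    rw [hexpand]
    rcases (hp x).eq_or_lt with hpx | hpx
    · simp [← hpx]
    · exact mul_le_mul_of_nonneg_left
        (Real.log_le_sub_one_of_pos (div_pos hpx (hq x))) hpx.le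
  have hsum : ∑ x, (p x - q x) = 0 := by rw [sum_sub_distrib, h, sub_self]
  calc KL p q ≤ ∑ x, ((p x - q x) ^ 2 / q x + (p x - q x)) := sum_le_sum fun x _ => hpt x
    _ = chiSq p q := by rw [sum_add_distrib, hsum, add_zero, chiSq]

theorem chiSq_le_two_mul_TV_sq_div {p q : V → ℝ} {c : ℝ} (hc : 0 < c) (hq : ∀ x, c ≤ q x)
    (h : ∑ x, p x = ∑ x, q x) : chiSq p q ≤ 2 * TV p q ^ 2 / c :=
  calc chiSq p q ≤ ∑ x, (p x - q x) ^ 2 / c := by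
        unfold chiSq
        gcongr with x
        exact hq x
    _ ≤ 2 * TV p q ^ 2 / c := by
        rw [← sum_div]
        gcongr
        exact sum_sq_sub_le_two_mul_TV_sq h

/-- The paper's `p^{μ,w}`: mixing `q` with the uniform distribution. -/
noncomputable def smoothUniform (μ : ℝ) (q : V → ℝ) : V → ℝ :=
  fun x => (1 - μ) * q x + μ / (Fintype.card V : ℝ)

theorem div_card_le_smoothUniform {μ : ℝ} {q : V → ℝ} (hμ1 : μ ≤ 1)
    (hq0 : ∀ x, 0 ≤ q x) (x : V) : μ / (Fintype.card V : ℝ) ≤ smoothUniform μ q x :=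
  le_add_of_nonneg_left (mul_nonneg (sub_nonneg.2 hμ1) (hq0 x))

theorem sum_smoothUniform [Nonempty V] (μ : ℝ) {q : V → ℝ} (hq1 : ∑ x, q x = 1) :
    ∑ x, smoothUniform μ q x = 1 := by
  have hN : (Fintype.card V : ℝ) ≠ 0 := by positivity
  simp [smoothUniform, sum_add_distrib, ← mul_sum, hq1, mul_div_cancel₀ μ hN]

theorem TV_smoothUniform_le [Nonempty V] {μ : ℝ} {q : V → ℝ} (hμ0 : 0 ≤ μ)
    (hq0 : ∀ x, 0 ≤ q x) (hq1 : ∑ x, q x = 1) : TV q (smoothUniform μ q) ≤ μ := by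
  have hunif : ∑ _x : V, 1 / (Fintype.card V : ℝ) = 1 := by simp
  have hsmooth :
      smoothUniform μ q = fun x => (1 - μ) * q x + μ * (1 / (Fintype.card V : ℝ)) := by
    simp only [mul_one_div]
    rfl
  rw [hsmooth, TV_mix_eq, abs_of_nonneg hμ0]
  exact mul_le_of_le_one_right hμ0 (TV_le_one hq0 hq1 (fun _ => by positivity) hunif)

end

theorem poly_mixing_KL_general {V : Type*} [Fintype V]
    (p pw : V → ℝ) (C α μ : ℝ) (w : ℕ)
    (hμ : μ ∈ Set.Ioo (0 : ℝ) 1)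
    (hp0 : ∀ x, 0 ≤ p x) (hp1 : ∑ x, p x = 1)
    (hq0 : ∀ x, 0 ≤ pw x) (hq1 : ∑ x, pw x = 1)
    (hTV : TV p pw ≤ C * (w : ℝ) ^ (-α)) :
    KL p (fun x => (1 - μ) * pw x + μ / (Fintype.card V : ℝ)) ≤
      (2 * (Fintype.card V : ℝ) / μ) * (C * (w : ℝ) ^ (-α) + μ) ^ 2 := by
  obtain ⟨hμ0, hμ1⟩ := hμ
  have : Nonempty V := by
    by_contra hV
    simp [not_nonempty_iff.1 hV] at hp1
  set N : ℝ := (Fintype.card V : ℝ)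
  set ε := C * (w : ℝ) ^ (-α)
  change KL p (smoothUniform μ pw) ≤ 2 * N / μ * (ε + μ) ^ 2
  set q := smoothUniform μ pw
  have hqlow : ∀ x, μ / N ≤ q x := div_card_le_smoothUniform hμ1.le hq0
  have hqpos : ∀ x, 0 < q x := fun x => (by positivity : 0 < μ / N).trans_le (hqlow x)
  have hqsum : ∑ x, p x = ∑ x, q x := by rw [hp1, sum_smoothUniform μ hq1]
  have hTVq : TV p q ≤ ε + μ := by
    linarith [TV_triangle p pw q, TV_smoothUniform_le hμ0.le hq0 hq1]
  calc KL p q ≤ chiSq p q := KL_le_chiSq hp0 hqpos hqsum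
    _ ≤ 2 * TV p q ^ 2 / (μ / N) := chiSq_le_two_mul_TV_sq_div (by positivity) hqlow hqsum
    _ ≤ 2 * (ε + μ) ^ 2 / (μ / N) := by gcongr; exact TV_nonneg p q
    _ = 2 * N / μ * (ε + μ) ^ 2 := by field_simp

/-- Polynomial KL form of truncation sensitivity: with
`TV(p, p_w) ≤ C·w^{−α}` and smoothing level `μ ∈ (0,1)` satisfying
`C·w^{−α} ≤ μ/(2N)`, the smoothed reconstruction
`p^{μ,w} = (1−μ)·p_w + μ/N` satisfies `KL(p‖p^{μ,w}) ≤ (2N/μ)·(C·w^{−α} + μ)²`. -/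
theorem poly_mixing_KL {V : Type*} [Fintype V] [Nonempty V]
    (p pw : V → ℝ) (C α μ : ℝ) (w : ℕ)
    (hw : 1 ≤ w) (hC : 0 < C) (hα : 0 < α) (hμ : μ ∈ Set.Ioo (0 : ℝ) 1)
    (hp0 : ∀ x, 0 ≤ p x) (hp1 : ∑ x, p x = 1)
    (hq0 : ∀ x, 0 ≤ pw x) (hq1 : ∑ x, pw x = 1)
    (hTV : TV p pw ≤ C * (w : ℝ) ^ (-α))
    (hsmall : C * (w : ℝ) ^ (-α) ≤ μ / (2 * (Fintype.card V : ℝ))) :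
    KL p (fun x => (1 - μ) * pw x + μ / (Fintype.card V : ℝ)) ≤
      (2 * (Fintype.card V : ℝ) / μ) * (C * (w : ℝ) ^ (-α) + μ) ^ 2 :=
  poly_mixing_KL_general p pw C α μ w hμ hp0 hp1 hq0 hq1 hTV
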